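/- Let Λ = 1 and 0 < θ < π/2. Then the set of minimizers of f_{θ,Λ} on [0, (π − θ)/2] is exactly {0, π/2 − θ}. -/
import Mathlib


open Real Set

noncomputable section

/-- `f_{θ,Λ}(η) = cos(θ + 2η) + 2Λ sin η`. -/
def fFun (θ Λ η : ℝ) : ℝ := Real.cos (θ + 2 * η) + 2 * Λ * Real.sin η

end

lemma fFun_key (θ η : ℝ) :
    fFun θ 1 η = Real.cos θ + 2 * Real.sin η * (1 - Real.sin (θ + η)) := by
  unfold fFun
  have h1 : θ + 2 * η = (θ + η) + η := by ring
  rw [h1, Real.cos_add]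
  have h2 := Real.cos_sub (θ + η) η
  rw [add_sub_cancel_right] at h2
  linarith [h2]

theorem stmt7 (θ : ℝ) (hθ0 : 0 < θ) (hθ : θ < Real.pi / 2) :
    {η | η ∈ Set.Icc 0 ((Real.pi - θ) / 2) ∧
        ∀ η' ∈ Set.Icc 0 ((Real.pi - θ) / 2), fFun θ 1 η ≤ fFun θ 1 η'} =
      {0, Real.pi / 2 - θ} := by
  have hπ := Real.pi_pos
  -- lower bound: for any η' in the interval, fFun θ 1 η' ≥ cos θ
  have hlb : ∀ η' ∈ Set.Icc 0 ((Real.pi - θ) / 2), Real.cos θ ≤ fFun θ 1 η' := by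
    intro η' hη'
    obtain ⟨h0, h1⟩ := hη'
    rw [fFun_key]
    have hs : 0 ≤ Real.sin η' :=
      Real.sin_nonneg_of_nonneg_of_le_pi h0 (by linarith)
    have hs2 : Real.sin (θ + η') ≤ 1 := Real.sin_le_one _
    nlinarith
  have hf0 : fFun θ 1 0 = Real.cos θ := by
    rw [fFun_key]; simp
  have hf1 : fFun θ 1 (Real.pi / 2 - θ) = Real.cos θ := by
    rw [fFun_key]
    have : θ + (Real.pi / 2 - θ) = Real.pi / 2 := by ring
    rw [this, Real.sin_pi_div_two]
    ring
  ext η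
  simp only [Set.mem_setOf_eq, Set.mem_insert_iff, Set.mem_singleton_iff]
  constructor
  · rintro ⟨⟨h0, h1⟩, hmin⟩
    -- f η ≤ f 0 = cos θ, and f η ≥ cos θ, so equality
    have hle : fFun θ 1 η ≤ Real.cos θ := by
      have := hmin 0 ⟨le_refl 0, by linarith⟩
      rwa [hf0] at this
    have hge := hlb η ⟨h0, h1⟩
    have heq : fFun θ 1 η = Real.cos θ := le_antisymm hle hge
    rw [fFun_key] at heq
    have hprod : Real.sin η * (1 - Real.sin (θ + η)) = 0 := by linarith
    rcases mul_eq_zero.mp hprod with h | h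
    · left
      have := (Real.sin_eq_zero_iff_of_lt_of_lt (by linarith : -Real.pi < η)
        (by linarith : η < Real.pi)).mp h
      exact this
    · right
      have hsin : Real.sin (θ + η) = 1 := by linarith
      obtain ⟨k, hk⟩ := Real.sin_eq_one_iff.mp hsin
      have hk1 : (-1 : ℤ) < k := by
        have : (-1 : ℝ) < (k : ℝ) := by nlinarith
        exact_mod_cast this
      have hk2 : (k : ℤ) < 1 := by
        have : (k : ℝ) < 1 := by nlinarith
        exact_mod_cast this
      have hk0 : k = 0 := by omega
      rw [hk0] at hk
      push_cast at hk
      linarith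
  · rintro (rfl | rfl)
    · exact ⟨⟨le_refl 0, by linarith⟩, fun η' hη' => by rw [hf0]; exact hlb η' hη'⟩
    · exact ⟨⟨by linarith, by linarith⟩, fun η' hη' => by rw [hf1]; exact hlb η' hη'⟩
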